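/- arXiv:1112.0748 — 5 statements merged into one kernel-verified Lean document; each statement's English description precedes it below -/
import Mathlib

section
/- Let r and k be positive integers such that r is even, k is odd, and 1 ≤ k ≤ r/2 − 1. Then there exists a (finite simple) r-regular graph that has no {k, r−k}-factor. -/
/-- A graph is `r`-regular if every vertex has degree `r`. -/
def IsRegular' {V : Type*} [Fintype V] (G : SimpleGraph V) (r : ℕ) : Prop :=
  ∀ v : V, (G.neighborSet v).ncard = r

/-- An `H`-factor of `G` is a spanning subgraph `F ≤ G` in which the degree of
every vertex belongs to `H`. -/
def HasHFactor {V : Type*} [Fintype V] (G : SimpleGraph V) (H : Set ℕ) : Prop :=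
  ∃ F : SimpleGraph V, F ≤ G ∧ ∀ v : V, (F.neighborSet v).ncard ∈ H

/-- Let `r` and `k` be positive integers such that `r` is even, `k` is odd, and
`1 ≤ k ≤ r/2 − 1`. Then there exists a finite simple `r`-regular graph having no
`{k, r−k}`-factor. -/
theorem stmt_0 (r k : ℕ) (hr : 0 < r) (hk : 0 < k) (hre : Even r) (hko : Odd k)
    (hk1 : 1 ≤ k) (hk2 : k ≤ r / 2 - 1) :
    ∃ (V : Type) (_ : Fintype V) (G : SimpleGraph V),
      IsRegular' G r ∧ ¬ HasHFactor G ({k, r - k} : Set ℕ) := by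
  classical
  refine ⟨Fin (r + 1), inferInstance, ⊤, ?_, ?_⟩
  · intro v
    rw [Set.ncard_eq_toFinset_card', ← SimpleGraph.neighborFinset_def,
      ← SimpleGraph.degree, SimpleGraph.complete_graph_degree]
    simp
  · rintro ⟨F, -, hdeg⟩
    have hrk : Odd (r - k) := by
      have hkr : k ≤ r := le_trans hk2 (le_trans (Nat.sub_le _ _) (Nat.div_le_self r 2))
      exact Nat.Even.sub_odd hkr hre hko
    have hodd : ∀ v : Fin (r + 1), Odd (F.degree v) := by
      intro v
      have := hdeg v
      rw [Set.ncard_eq_toFinset_card', ← SimpleGraph.neighborFinset_def,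
        ← SimpleGraph.degree] at this
      rcases this with h | h
      · rw [h]; exact hko
      · rw [h]; exact hrk
    have hev := F.even_card_odd_degree_vertices
    have : (Finset.univ.filter fun v : Fin (r + 1) => Odd (F.degree v)) = Finset.univ := by
      exact Finset.filter_true_of_mem fun v _ => hodd v
    rw [this] at hev
    simp only [Finset.card_univ, Fintype.card_fin] at hev
    exact (Nat.even_add_one.mp hev) hre
end

section
/- Let r be an even positive integer with r/2 odd, and let G be a finite connected r-regular simple graph. Then G has an (r/2)-factor if and only if the number of vertices of G is even. -/
/-- A `k`-factor of `G` is a spanning subgraph `F ≤ G` in which every vertex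
has degree exactly `k`. -/
def HasKFactor {V : Type*} [Fintype V] (G : SimpleGraph V) (k : ℕ) : Prop :=
  ∃ F : SimpleGraph V, F ≤ G ∧ ∀ v : V, (F.neighborSet v).ncard = k

/-!
A connected graph with all degrees even has an Eulerian circuit. For `G` connected and
`2k`-regular with `k` odd, the circuit has length `|E(G)| = k·|V|`; when `|V|` is even this is
even, and colouring its edges alternately makes every vertex meet `k` edges of each colour, one of
each per passage. Conversely a `k`-factor has `k·|V|/2` edges, so `k·|V|` is even, and `k` is odd.
-/

namespace List

variable {α : Type*}

/-- `alternate true l` keeps the entries of `l` at even positions, `alternate false l` those at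
odd positions. -/
def alternate : Bool → List α → List α
  | _, [] => []
  | true, a :: l => a :: alternate false l
  | false, _ :: l => alternate true l

@[simp] lemma alternate_nil (b : Bool) : alternate b ([] : List α) = [] := by
  cases b <;> rfl

@[simp] lemma alternate_true_cons (a : α) (l : List α) :
    alternate true (a :: l) = a :: alternate false l := rfl

@[simp] lemma alternate_false_cons (a : α) (l : List α) :
    alternate false (a :: l) = alternate true l := rfl

lemma alternate_sublist : ∀ (b : Bool) (l : List α), alternate b l <+ l
  | _, [] => by simp
  | true, a :: l => (alternate_sublist false l).cons_cons a
  | false, a :: l => (alternate_sublist true l).cons a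

lemma countP_alternate_true_add_false (q : α → Bool) :
    ∀ l : List α, (alternate true l).countP q + (alternate false l).countP q = l.countP q
  | [] => rfl
  | a :: l => by
    simp only [alternate_true_cons, alternate_false_cons, countP_cons]
    have := countP_alternate_true_add_false q l
    omega

end List

open Finset

namespace SimpleGraph

variable {V : Type*} {G : SimpleGraph V}

namespace Walk

variable [DecidableEq V] {u v : V}

lemma countP_alternate_edges_sub (p : G.Walk u v) (x : V) :
    ((p.edges.alternate true).countP (x ∈ ·) : ℤ) - (p.edges.alternate false).countP (x ∈ ·)
      = (if u = x then 1 else 0) + (-1) ^ (p.length + 1) * (if v = x then 1 else 0) := by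
  induction p with
  | nil => split_ifs <;> simp
  | @cons a b c h p ih =>
    have hmem : (if x ∈ s(a, b) then (1 : ℤ) else 0)
        = (if a = x then 1 else 0) + (if b = x then 1 else 0) := by
      have := h.ne
      by_cases ha : a = x <;> by_cases hb : b = x <;> simp_all [eq_comm]
    simp only [edges_cons, List.alternate_true_cons, List.alternate_false_cons,
      List.countP_cons, length_cons, decide_eq_true_eq]
    push_cast
    linear_combination hmem - ih

lemma countP_alternate_edges_eq_of_even_length (p : G.Walk u u) (hp : Even p.length) (x : V) :
    (p.edges.alternate true).countP (x ∈ ·) = (p.edges.alternate false).countP (x ∈ ·) := by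
  have h := p.countP_alternate_edges_sub x
  rw [(hp.add_one).neg_one_pow] at h
  omega

lemma IsTrail.countP_mem_edges_eq_card_filter {p : G.Walk u v} (hp : p.IsTrail) (x : V) :
    p.edges.countP (x ∈ ·) = #{e ∈ p.edges.toFinset | x ∈ e} := by
  rw [List.countP_eq_length_filter, ← List.toFinset_card_of_nodup (hp.edges_nodup.filter _),
    List.toFinset_filter]
  simp only [decide_eq_true_eq]

lemma IsEulerian.countP_mem_edges_eq_degree [Fintype V] [DecidableRel G.Adj] {p : G.Walk u v}
    (hp : p.IsEulerian) (x : V) : p.edges.countP (x ∈ ·) = G.degree x := by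
  rw [hp.isTrail.countP_mem_edges_eq_card_filter, ← card_incidenceFinset_eq_degree,
    incidenceFinset_eq_filter]
  congr 2
  ext e
  simp [hp.mem_edges_iff]

lemma IsEulerian.length_eq_card_edgeFinset [Fintype G.edgeSet] {p : G.Walk u v}
    (hp : p.IsEulerian) : p.length = #G.edgeFinset := by
  rw [← hp.edgesFinset_eq, ← p.length_edges]
  rfl

/-- The trail uses an odd number of the edges at `v`, hence not all of them. -/
lemma IsTrail.exists_adj_not_mem_edges [Fintype V] [DecidableRel G.Adj] {p : G.Walk u v}
    (hp : p.IsTrail) (huv : u ≠ v) (hv : Even (G.degree v)) :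
    ∃ w, G.Adj v w ∧ s(v, w) ∉ p.edges := by
  by_contra! hall
  have hfilter : {e ∈ p.edges.toFinset | v ∈ e} = G.incidenceFinset v := by
    ext e
    simp only [Finset.mem_filter, List.mem_toFinset, mem_incidenceFinset, incidenceSet,
      Set.mem_ofPred_eq]
    refine ⟨fun h ↦ ⟨p.edges_subset_edgeSet h.1, h.2⟩, fun ⟨he, hve⟩ ↦ ⟨?_, hve⟩⟩
    rw [← Sym2.other_spec hve] at he ⊢
    exact hall _ he
  have hcount := hp.even_countP_edges_iff v
  rw [hp.countP_mem_edges_eq_card_filter, hfilter, card_incidenceFinset_eq_degree] at hcount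
  exact (hcount.mp hv huv).2 rfl

lemma exists_adj_mem_support_not_mem_edges (hconn : G.Connected) (p : G.Walk u v)
    {e : Sym2 V} (he : e ∈ G.edgeSet) (hep : e ∉ p.edges) :
    ∃ a b, b ∈ p.support ∧ G.Adj a b ∧ s(a, b) ∉ p.edges := by
  induction e using Sym2.ind with | _ x y
  by_cases hx : x ∈ p.support
  · exact ⟨y, x, hx, G.adj_symm he, by rwa [Sym2.eq_swap]⟩
  · obtain ⟨d, -, hd, hdx⟩ := (hconn u x).some
      |>.exists_boundary_dart {z | z ∈ p.support} p.start_mem_support hx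
    exact ⟨d.snd, d.fst, hd, d.adj.symm,
      fun h ↦ hdx (p.fst_mem_support_of_mem_edges h)⟩

end Walk

/-- Euler's theorem: a longest trail is closed, since an open trail can always be extended at an
even-degree end, and it uses every edge, since otherwise a rotation of it can be extended. -/
theorem Connected.exists_isEulerian [Fintype V] [DecidableEq V] [DecidableRel G.Adj]
    (hconn : G.Connected) (heven : ∀ v, Even (G.degree v)) :
    ∃ (u : V) (p : G.Walk u u), p.IsEulerian := by
  have := hconn.nonempty
  obtain ⟨u, v, p, hp, hmax⟩ := Walk.exists_isTrail_forall_isTrail_length_le_length G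
  obtain rfl : u = v := by
    by_contra huv
    obtain ⟨w, hvw, hw⟩ := hp.exists_adj_not_mem_edges huv (heven v)
    have hq : (p.concat hvw).IsTrail := by
      rw [Walk.isTrail_def, Walk.edges_concat, List.nodup_concat]
      exact ⟨hw, hp.edges_nodup⟩
    have := hmax _ _ _ hq
    rw [Walk.length_concat] at this
    omega
  refine ⟨u, p, p.isEulerian_iff.mpr ⟨hp, ?_⟩⟩
  by_contra! ⟨e, he, hep⟩
  obtain ⟨a, b, hb, hab, hnotin⟩ := Walk.exists_adj_mem_support_not_mem_edges hconn p he hep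
  have hq : (Walk.cons hab (p.rotate b hb)).IsTrail := by
    rw [Walk.isTrail_cons]
    exact ⟨hp.rotate hb, fun h ↦ hnotin ((p.rotate_edges b hb).mem_iff.mp h)⟩
  have := hmax _ _ _ hq
  rw [Walk.length_cons, ← Walk.length_edges, ← Walk.length_edges,
    (p.rotate_edges b hb).perm.length_eq] at this
  omega

lemma isRegularOfDegree_of_forall_ncard_neighborSet [Fintype V] [DecidableRel G.Adj] {k : ℕ}
    (h : ∀ v, (G.neighborSet v).ncard = k) : G.IsRegularOfDegree k := fun v ↦ by
  rw [← h v, ← card_neighborSet_eq_degree, Set.ncard_eq_toFinset_card', Set.toFinset_card]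

lemma IsRegularOfDegree.card_mul_eq_two_mul_card_edgeFinset [Fintype V] [DecidableRel G.Adj]
    {k : ℕ} (h : G.IsRegularOfDegree k) : Fintype.card V * k = 2 * #G.edgeFinset := by
  rw [← sum_degrees_eq_twice_card_edges, Finset.sum_congr rfl fun v _ ↦ h.degree_eq v,
    Finset.sum_const, Finset.card_univ, smul_eq_mul]

lemma ncard_neighborSet_fromEdgeSet [DecidableEq V] {L : List (Sym2 V)} (hL : L.Nodup)
    (hdiag : ∀ e ∈ L, ¬ e.IsDiag) (v : V) :
    ((fromEdgeSet {e | e ∈ L}).neighborSet v).ncard = L.countP (v ∈ ·) := by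
  have hinc : (fromEdgeSet {e | e ∈ L}).incidenceSet v = ↑(L.filter (v ∈ ·)).toFinset := by
    ext e
    simp only [incidenceSet, edgeSet_fromEdgeSet, List.coe_toFinset, List.mem_filter]
    simp +contextual [hdiag]
  rw [← Nat.card_coe_set_eq, ← Nat.card_congr (incidenceSetEquivNeighborSet _ v),
    Nat.card_coe_set_eq, hinc, Set.ncard_coe_finset,
    List.toFinset_card_of_nodup (hL.filter _), List.countP_eq_length_filter]

lemma Walk.IsEulerian.hasKFactor [Fintype V] [DecidableEq V] [DecidableRel G.Adj] {k : ℕ}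
    {u : V} {p : G.Walk u u} (hp : p.IsEulerian) (hlen : Even p.length)
    (hdeg : G.IsRegularOfDegree (2 * k)) : HasKFactor G k := by
  have hsub := List.alternate_sublist true p.edges
  have hG : ∀ e ∈ p.edges.alternate true, e ∈ G.edgeSet :=
    fun e he ↦ p.edges_subset_edgeSet (hsub.subset he)
  refine ⟨fromEdgeSet {e | e ∈ p.edges.alternate true}, ?_, fun v ↦ ?_⟩
  · exact (fromEdgeSet_mono hG).trans (fromEdgeSet_edgeSet G).le
  · rw [ncard_neighborSet_fromEdgeSet (hsub.nodup hp.isTrail.edges_nodup)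
      (fun e he ↦ G.not_isDiag_of_mem_edgeSet (hG e he))]
    have hhalves := p.countP_alternate_edges_eq_of_even_length hlen v
    have htotal := List.countP_alternate_true_add_false (v ∈ ·) p.edges
    rw [hp.countP_mem_edges_eq_degree, hdeg.degree_eq] at htotal
    omega

end SimpleGraph

theorem stmt_1_general (r : ℕ) (hre : Even r) (hro : Odd (r / 2))
    {V : Type*} [Fintype V] (G : SimpleGraph V)
    (hconn : G.Connected) (hreg : IsRegular' G r) :
    HasKFactor G (r / 2) ↔ Even (Fintype.card V) := by
  classical
  obtain ⟨k, rfl⟩ := hre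
  rw [show (k + k) / 2 = k by omega] at hro ⊢
  rw [← two_mul] at hreg
  have hG : G.IsRegularOfDegree (2 * k) :=
    SimpleGraph.isRegularOfDegree_of_forall_ncard_neighborSet hreg
  have hcardE : #G.edgeFinset = Fintype.card V * k := by
    linarith [hG.card_mul_eq_two_mul_card_edgeFinset]
  constructor
  · rintro ⟨F, -, hF⟩
    have hFE := (SimpleGraph.isRegularOfDegree_of_forall_ncard_neighborSet hF)
      |>.card_mul_eq_two_mul_card_edgeFinset
    have : Even (Fintype.card V * k) := ⟨_, hFE.trans (two_mul _)⟩
    exact (Nat.even_mul.mp this).resolve_right (Nat.not_even_iff_odd.mpr hro)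
  · intro hcard
    obtain ⟨u, p, hp⟩ := hconn.exists_isEulerian fun v ↦ hG.degree_eq v ▸ even_two_mul k
    refine hp.hasKFactor ?_ hG
    rw [hp.length_eq_card_edgeFinset, hcardE]
    exact hcard.mul_right k

/-- Let `r` be an even positive integer with `r/2` odd, and let `G` be a finite
connected `r`-regular simple graph. Then `G` has an `(r/2)`-factor if and only if
the number of vertices of `G` is even. -/
theorem stmt_1 (r : ℕ) (hr : 0 < r) (hre : Even r) (hro : Odd (r / 2))
    {V : Type*} [Fintype V] (G : SimpleGraph V)
    (hconn : G.Connected) (hreg : IsRegular' G r) :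
    HasKFactor G (r / 2) ↔ Even (Fintype.card V) :=
  stmt_1_general r hre hro G hconn hreg
end

section
/- Let r and k be positive integers such that r is even, r/2 is odd, k is odd, and 1 ≤ k ≤ r/2 − 2. Then there exists an r-regular simple graph on r(r+1)/2 + 1 vertices that has no {k, r−k}-factor. -/
open SimpleGraph

private lemma circ_ncard (m h : ℕ) [NeZero m] (hm : 2 * h < m) (v : ZMod m) :
    ((circulantGraph {x : ZMod m | 1 ≤ x.val ∧ x.val ≤ h}).neighborSet v).ncard = 2 * h := by
  set s : Set (ZMod m) := {x : ZMod m | 1 ≤ x.val ∧ x.val ≤ h} with hs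
  have hvne : ∀ x ∈ s, x ≠ 0 := by
    rintro x ⟨h1, _⟩ rfl
    simp [ZMod.val_zero] at h1
  have hset : (circulantGraph s).neighborSet v
      = (fun x => v - x) '' s ∪ (fun x => v + x) '' s := by
    ext w
    simp only [mem_neighborSet, circulantGraph_adj, Set.mem_union, Set.mem_image]
    constructor
    · rintro ⟨hne, hc | hc⟩
      · exact Or.inl ⟨v - w, hc, by ring⟩
      · exact Or.inr ⟨w - v, hc, by ring⟩
    · rintro (⟨x, hx, rfl⟩ | ⟨x, hx, rfl⟩)
      · refine ⟨?_, Or.inl (by simpa using hx)⟩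
        intro hvw
        exact hvne x hx (by linear_combination hvw)
      · refine ⟨?_, Or.inr (by simpa using hx)⟩
        intro hvw
        exact hvne x hx (by linear_combination -hvw)
  have hscard : s.ncard = h := by
    have himg : s = (fun n : ℕ => (n : ZMod m)) '' Set.Icc 1 h := by
      ext x
      constructor
      · rintro ⟨h1, h2⟩
        exact ⟨x.val, ⟨h1, h2⟩, by simp [ZMod.natCast_val, ZMod.cast_id]⟩
      · rintro ⟨n, hn, rfl⟩
        simp only [Set.mem_Icc] at hn
        have hv : ((n : ZMod m)).val = n := ZMod.val_cast_of_lt (by omega)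
        simp only [hs, Set.mem_setOf_eq, hv]
        omega
    have hinj : Set.InjOn (fun n : ℕ => (n : ZMod m)) (Set.Icc 1 h) := by
      intro a ha b hb hab
      simp only [Set.mem_Icc] at ha hb
      have ha' : ((a : ZMod m)).val = a := ZMod.val_cast_of_lt (by omega)
      have hb' : ((b : ZMod m)).val = b := ZMod.val_cast_of_lt (by omega)
      rw [← ha', ← hb']
      exact congrArg ZMod.val hab
    rw [himg, Set.ncard_image_of_injOn hinj, ← Finset.coe_Icc, Set.ncard_coe_finset,
      Nat.card_Icc]
    omega
  have hdisj : Disjoint ((fun x => v - x) '' s) ((fun x => v + x) '' s) := by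
    rw [Set.disjoint_left]
    rintro w ⟨x, hx, rfl⟩ ⟨y, hy, he⟩
    have hxy : x = -y := by linear_combination he
    have hy0 : y ≠ 0 := hvne y hy
    have hxv : x.val = m - y.val := by
      rw [hxy, ZMod.neg_val]
      simp [hy0]
    have hx2 := hx.2
    have hy2 := hy.2
    have hyv : y.val < m := ZMod.val_lt y
    omega
  rw [hset, Set.ncard_union_eq hdisj (Set.toFinite _) (Set.toFinite _),
    Set.ncard_image_of_injective _ (sub_right_injective),
    Set.ncard_image_of_injective _ (add_right_injective v), hscard]
  omega

private lemma sum_inl_neighborSet {α β : Type} (G : SimpleGraph α) (H : SimpleGraph β) (a : α) :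
    (G ⊕g H).neighborSet (Sum.inl a) = Sum.inl '' (G.neighborSet a) := by
  ext w
  cases w with
  | inl b => simp [SimpleGraph.sum]
  | inr b => simp [SimpleGraph.sum]

private lemma sum_inr_neighborSet {α β : Type} (G : SimpleGraph α) (H : SimpleGraph β) (b : β) :
    (G ⊕g H).neighborSet (Sum.inr b) = Sum.inr '' (H.neighborSet b) := by
  ext w
  cases w with
  | inl a => simp [SimpleGraph.sum]
  | inr a => simp [SimpleGraph.sum]

/-- Let `r` and `k` be positive integers such that `r` is even, `r/2` is odd,
`k` is odd, and `1 ≤ k ≤ r/2 − 2`. Then there exists an `r`-regular simple graph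
on `r(r+1)/2 + 1` vertices that has no `{k, r−k}`-factor. -/
theorem stmt_3 (r k : ℕ) (hr : 0 < r) (hk : 0 < k) (hre : Even r)
    (hro : Odd (r / 2)) (hko : Odd k) (hk1 : 1 ≤ k) (hk2 : k ≤ r / 2 - 2) :
    ∃ (V : Type) (_ : Fintype V) (G : SimpleGraph V),
      Fintype.card V = r * (r + 1) / 2 + 1 ∧
      IsRegular' G r ∧ ¬ HasHFactor G ({k, r - k} : Set ℕ) := by
  classical
  set h := r / 2 with hh
  have hr2 : r = 2 * h := by
    obtain ⟨t, ht⟩ := hre; omega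
  have h3 : 3 ≤ h := by
    rcases hro with ⟨t, ht⟩
    omega
  set m := h * (2 * h - 1) with hm
  have hm2h : 2 * h < m := by
    have : 3 * (2 * h - 1) ≤ h * (2 * h - 1) := Nat.mul_le_mul_right _ h3
    omega
  haveI : NeZero m := ⟨by omega⟩
  set C : SimpleGraph (ZMod m) :=
    circulantGraph {x : ZMod m | 1 ≤ x.val ∧ x.val ≤ h} with hC
  set G : SimpleGraph (Fin (r + 1) ⊕ ZMod m) := (⊤ : SimpleGraph (Fin (r + 1))) ⊕g C with hG
  refine ⟨Fin (r + 1) ⊕ ZMod m, inferInstance, G, ?_, ?_, ?_⟩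
  · -- cardinality
    rw [Fintype.card_sum, Fintype.card_fin, ZMod.card m]
    have e1 : r * (r + 1) = 2 * (2 * h * h + h) := by rw [hr2]; ring
    rw [e1, Nat.mul_div_cancel_left _ (by norm_num : 0 < 2)]
    have e2 : h * (2 * h - 1) + h = 2 * h * h := by
      rw [← Nat.mul_succ, show (2 * h - 1).succ = 2 * h by omega]; ring
    omega
  · -- regularity
    intro v
    cases v with
    | inl a =>
      rw [hG, sum_inl_neighborSet, Set.ncard_image_of_injective _ Sum.inl_injective]
      have : (⊤ : SimpleGraph (Fin (r + 1))).neighborSet a = {a}ᶜ := by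
        ext w; simp [ne_comm]
      rw [this]
      have hcompl := Set.ncard_add_ncard_compl ({a} : Set (Fin (r + 1)))
      simp [Set.ncard_singleton, Nat.card_eq_fintype_card] at hcompl
      omega
    | inr b =>
      rw [hG, sum_inr_neighborSet, Set.ncard_image_of_injective _ Sum.inr_injective, hC,
        circ_ncard m h hm2h b]
      omega
  · -- no {k, r-k}-factor
    rintro ⟨F, hFG, hdeg⟩
    haveI : DecidableRel F.Adj := Classical.decRel _
    set F₁ : SimpleGraph (Fin (r + 1)) := F.comap Sum.inl with hF₁
    haveI : DecidableRel F₁.Adj := Classical.decRel _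
    have hkey : ∀ a : Fin (r + 1), F₁.degree a = (F.neighborSet (Sum.inl a)).ncard := by
      intro a
      have himg : F.neighborSet (Sum.inl a) = Sum.inl '' (F₁.neighborSet a) := by
        ext w
        cases w with
        | inl b => simp [hF₁, comap_adj]
        | inr b =>
          simp only [mem_neighborSet, Set.mem_image]
          constructor
          · intro hadj
            exact absurd (hFG hadj) (by simp [hG, SimpleGraph.sum])
          · rintro ⟨c, _, hc⟩
            exact absurd hc (by simp)
      rw [himg, Set.ncard_image_of_injective _ Sum.inl_injective,
        Set.ncard_eq_toFinset_card']
      rfl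
    have hodd : ∀ a : Fin (r + 1), Odd (F₁.degree a) := by
      intro a
      rw [hkey a]
      rcases hdeg (Sum.inl a) with hd | hd
      · rw [hd]; exact hko
      · rw [Set.mem_singleton_iff] at hd
        rw [hd]
        exact Nat.Even.sub_odd (by omega) hre hko
    have heven : Even (∑ a : Fin (r + 1), F₁.degree a) := by
      rw [F₁.sum_degrees_eq_twice_card_edges]
      exact even_two_mul _
    have hodd' : Odd (∑ a : Fin (r + 1), F₁.degree a) := by
      rw [Finset.odd_sum_iff_odd_card_odd]
      rw [Finset.filter_true_of_mem (fun a _ => hodd a)]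
      simp only [Finset.card_univ, Fintype.card_fin]
      rw [hr2]
      exact ⟨h, by ring⟩
    exact (Nat.not_even_iff_odd.mpr hodd') heven
end

section
/- Let r and k be positive integers such that r is even, r/2 is even, k is odd, and 1 ≤ k ≤ r/2 − 3. Then there exists an r-regular simple graph on r(r+1) + 2 vertices that has no {k, r−k}-factor. -/
open Finset

/-- Circulant-type graph on `ZMod n`: connect `a` and `b` when they differ by
`t` for some `1 ≤ t ≤ s`. -/
def circ (n s : ℕ) : SimpleGraph (ZMod n) :=
  SimpleGraph.fromRel (fun a b => ∃ t : ℕ, t ∈ Finset.Icc 1 s ∧ b = a + t)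

lemma circ_neighborSet (n s : ℕ) [NeZero n] (hsn : 2 * s < n) (a : ZMod n) :
    (circ n s).neighborSet a =
      ↑(((Finset.Icc 1 s : Finset ℕ).image (fun t : ℕ => a + (t : ZMod n))) ∪
        ((Finset.Icc 1 s : Finset ℕ).image (fun t : ℕ => a - (t : ZMod n)))) := by
  have hcast : ∀ t : ℕ, t ∈ Finset.Icc 1 s → (t : ZMod n) ≠ 0 := by
    intro t ht h
    rw [ZMod.natCast_eq_zero_iff] at h
    simp only [mem_Icc] at ht
    have := Nat.le_of_dvd (by omega) h
    omega
  ext b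
  simp only [SimpleGraph.mem_neighborSet, circ, SimpleGraph.fromRel_adj, Finset.coe_union,
    Set.mem_union, coe_image, Set.mem_image, mem_coe]
  constructor
  · rintro ⟨hne, ⟨t, ht, rfl⟩ | ⟨t, ht, hb⟩⟩
    · exact Or.inl ⟨t, ht, rfl⟩
    · refine Or.inr ⟨t, ht, ?_⟩
      rw [hb]; ring
  · rintro (⟨t, ht, rfl⟩ | ⟨t, ht, rfl⟩)
    · exact ⟨fun h => hcast t ht (by linear_combination -h), Or.inl ⟨t, ht, rfl⟩⟩
    · refine ⟨fun h => hcast t ht (by linear_combination h), Or.inr ⟨t, ht, by ring⟩⟩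

lemma circ_regular (n s : ℕ) [NeZero n] (hsn : 2 * s < n) (a : ZMod n) :
    ((circ n s).neighborSet a).ncard = 2 * s := by
  rw [circ_neighborSet n s hsn a, Set.ncard_coe_finset]
  have hvt : ∀ t : ℕ, t ∈ Finset.Icc 1 s → ((t : ZMod n)).val = t := by
    intro t ht
    simp only [mem_Icc] at ht
    exact ZMod.val_cast_of_lt (by omega)
  have hc1 : ((Finset.Icc 1 s : Finset ℕ).image (fun t : ℕ => a + (t : ZMod n))).card = s := by
    rw [Finset.card_image_of_injOn, Nat.card_Icc]; · omega
    intro t₁ h₁ t₂ h₂ h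
    have h' : (t₁ : ZMod n) = t₂ := by linear_combination h
    rw [← hvt t₁ h₁, ← hvt t₂ h₂, h']
  have hc2 : ((Finset.Icc 1 s : Finset ℕ).image (fun t : ℕ => a - (t : ZMod n))).card = s := by
    rw [Finset.card_image_of_injOn, Nat.card_Icc]; · omega
    intro t₁ h₁ t₂ h₂ h
    have h' : (t₁ : ZMod n) = t₂ := by linear_combination -h
    rw [← hvt t₁ h₁, ← hvt t₂ h₂, h']
  rw [Finset.card_union_of_disjoint, hc1, hc2]; · omega
  rw [Finset.disjoint_left]
  rintro x hx hy
  simp only [mem_image, mem_Icc] at hx hy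
  obtain ⟨t₁, h₁, rfl⟩ := hx
  obtain ⟨t₂, h₂, h⟩ := hy
  have h0 : ((t₁ + t₂ : ℕ) : ZMod n) = 0 := by push_cast; linear_combination -h
  rw [ZMod.natCast_eq_zero_iff] at h0
  have := Nat.le_of_dvd (by omega) h0
  omega

lemma sum_neighborSet_inl {α β : Type*} (G : SimpleGraph α) (H : SimpleGraph β) (a : α) :
    (G ⊕g H).neighborSet (Sum.inl a) = Sum.inl '' (G.neighborSet a) := by
  ext b
  cases b with
  | inl b => simp [SimpleGraph.mem_neighborSet, SimpleGraph.sum_adj]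
  | inr b => simp [SimpleGraph.mem_neighborSet, SimpleGraph.sum_adj]

lemma sum_neighborSet_inr {α β : Type*} (G : SimpleGraph α) (H : SimpleGraph β) (a : β) :
    (G ⊕g H).neighborSet (Sum.inr a) = Sum.inr '' (H.neighborSet a) := by
  ext b
  cases b with
  | inl b => simp [SimpleGraph.mem_neighborSet, SimpleGraph.sum_adj]
  | inr b => simp [SimpleGraph.mem_neighborSet, SimpleGraph.sum_adj]

lemma odd_cast_zmod2 {m : ℕ} (h : Odd m) : (m : ZMod 2) = 1 := by
  obtain ⟨j, rfl⟩ := h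
  push_cast
  rw [show (2 : ZMod 2) = 0 by decide]
  ring


/-- Let `r` and `k` be positive integers such that `r` is even, `r/2` is even,
`k` is odd, and `1 ≤ k ≤ r/2 − 3`. Then there exists an `r`-regular simple graph
on `r(r+1) + 2` vertices that has no `{k, r−k}`-factor. -/
theorem stmt_4 (r k : ℕ) (hr : 0 < r) (hk : 0 < k) (hre : Even r)
    (hre2 : Even (r / 2)) (hko : Odd k) (hk1 : 1 ≤ k) (hk2 : k ≤ r / 2 - 3) :
    ∃ (V : Type) (_ : Fintype V) (G : SimpleGraph V),
      Fintype.card V = r * (r + 1) + 2 ∧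
      IsRegular' G r ∧ ¬ HasHFactor G ({k, r - k} : Set ℕ) := by

  classical
  have hr2 : 2 * (r / 2) = r := Nat.two_mul_div_two_of_even hre
  haveI : NeZero (r + 1) := ⟨Nat.succ_ne_zero r⟩
  haveI : NeZero (r * r + 1) := ⟨Nat.succ_ne_zero _⟩
  have h1 : 2 * (r / 2) < r + 1 := by omega
  have h2 : 2 * (r / 2) < r * r + 1 := by nlinarith
  refine ⟨ZMod (r + 1) ⊕ ZMod (r * r + 1), inferInstance,
    circ (r + 1) (r / 2) ⊕g circ (r * r + 1) (r / 2), ?_, ?_, ?_⟩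
  · simp [ZMod.card]; ring
  · rintro (a | a)
    · rw [sum_neighborSet_inl, Set.ncard_image_of_injective _ Sum.inl_injective,
        circ_regular _ _ h1, hr2]
    · rw [sum_neighborSet_inr, Set.ncard_image_of_injective _ Sum.inr_injective,
        circ_regular _ _ h2, hr2]
  · rintro ⟨F, hF, hdeg⟩
    -- restrict F to the left component
    set F₁ : SimpleGraph (ZMod (r + 1)) := SimpleGraph.comap Sum.inl F with hF₁
    have hns : ∀ a : ZMod (r + 1),
        F.neighborSet (Sum.inl a) = Sum.inl '' (F₁.neighborSet a) := by
      intro a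
      ext b
      cases b with
      | inl b => simp [hF₁, SimpleGraph.mem_neighborSet]
      | inr b =>
        simp only [SimpleGraph.mem_neighborSet, Set.mem_image]
        constructor
        · intro h
          exact absurd (hF h) (by simp [SimpleGraph.sum_adj])
        · rintro ⟨x, -, h⟩; exact absurd h (by simp)
    have hdeg1 : ∀ a : ZMod (r + 1), Odd ((F₁.neighborSet a).ncard) := by
      intro a
      have := hdeg (Sum.inl a)
      rw [hns a, Set.ncard_image_of_injective _ Sum.inl_injective] at this
      rcases this with h | h
      · rw [h]; exact hko
      · rw [h]; exact Nat.Even.sub_odd (by omega) hre hko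
    -- handshake
    have hhs := SimpleGraph.sum_degrees_eq_twice_card_edges F₁
    have heq : ∀ a : ZMod (r + 1), F₁.degree a = (F₁.neighborSet a).ncard := by
      intro a
      simp [SimpleGraph.degree, SimpleGraph.neighborFinset_def, Set.ncard_eq_toFinset_card']
    have hcast : ((∑ a : ZMod (r + 1), F₁.degree a : ℕ) : ZMod 2) = 0 := by
      rw [hhs]; push_cast; rw [show (2 : ZMod 2) = 0 by decide]; ring
    rw [Nat.cast_sum] at hcast
    have : ∀ a : ZMod (r + 1), ((F₁.degree a : ℕ) : ZMod 2) = 1 := by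
      intro a
      exact odd_cast_zmod2 (heq a ▸ hdeg1 a)
    rw [Finset.sum_congr rfl (fun a _ => this a), Finset.sum_const, Finset.card_univ,
      ZMod.card, nsmul_eq_mul, mul_one] at hcast
    rw [odd_cast_zmod2 (by simp [Nat.odd_add_one, Nat.not_odd_iff_even.mpr hre, hre] : Odd (r+1))] at hcast
    exact one_ne_zero hcast
end

section
/- (Petersen) Let r and k be positive even integers with k ≤ r. Then every r-regular finite simple graph has a k-factor. -/
/-!
Every graph whose degrees are all even has an Eulerian orientation, in which each vertex has as
many outgoing as incoming edges: since no degree is `1` the graph contains a cycle, which is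
oriented along itself, and the remaining edges are oriented by induction. In a `2m`-regular graph
every vertex then has `m` out- and `m` in-neighbours, so Hall's theorem gives a permutation `σ`
with each `σ v` an out-neighbour of `v`. As `σ` has no fixed points and no `2`-cycles, the edges
`v σ(v)` form a `2`-factor; removing it leaves a `(2m - 2)`-regular graph, and induction produces
`2j`-factors for all `2j ≤ 2m`.
-/

theorem List.Nodup.ncard_setOf_prodMk_mem {α β : Type*} [DecidableEq α] {L : List (α × β)}
    (hL : L.Nodup) (a : α) : {b | (a, b) ∈ L}.ncard = (L.map Prod.fst).count a := by
  classical
  have hset : {b | (a, b) ∈ L} = ↑((L.filter (·.1 = a)).map Prod.snd).toFinset := by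
    ext b; simp
  have hinj : Set.InjOn Prod.snd {p | p ∈ L.filter (·.1 = a)} := by
    rintro ⟨a₁, b₁⟩ h₁ ⟨a₂, b₂⟩ h₂ (rfl : b₁ = b₂)
    simp only [Set.mem_ofPred_eq, List.mem_filter, decide_eq_true_eq] at h₁ h₂
    rw [h₁.2, h₂.2]
  rw [hset, Set.ncard_coe_finset, List.toFinset_card_of_nodup
    ((hL.filter _).map_on fun x hx y hy => hinj hx hy), List.length_map,
    ← List.countP_eq_length_filter, List.count, List.countP_map]
  rfl

open Function in
theorem exists_injective_of_le_ncard_of_ncard_le {α β : Type*} [Finite α] [Finite β]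
    {r : α → β → Prop} {m : ℕ} (hm : 0 < m) (hout : ∀ a, m ≤ {b | r a b}.ncard)
    (hin : ∀ b, {a | r a b}.ncard ≤ m) : ∃ f : α → β, Injective f ∧ ∀ a, r a (f a) := by
  classical
  have := Fintype.ofFinite β
  refine (Fintype.all_card_le_filter_rel_iff_exists_injective r).1 fun A => ?_
  refine Nat.le_of_mul_le_mul_right (Finset.card_mul_le_card_mul r (m := m) (n := m)
    (fun a ha => (hout a).trans ?_) (fun b _ => le_trans ?_ (hin b))) hm
  · rw [← Set.ncard_coe_finset]
    refine Set.ncard_le_ncard fun b hb => ?_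
    simpa [Finset.bipartiteAbove] using ⟨⟨a, ha, hb⟩, hb⟩
  · rw [← Set.ncard_coe_finset]
    exact Set.ncard_le_ncard fun a ha => by simp_all [Finset.bipartiteBelow]

namespace SimpleGraph

variable {V : Type*} {G H : SimpleGraph V}

theorem ncard_neighborSet_sup [Finite V] (h : Disjoint G H) (v : V) :
    ((G ⊔ H).neighborSet v).ncard = (G.neighborSet v).ncard + (H.neighborSet v).ncard := by
  rw [neighborSet_sup, Set.ncard_union_eq (disjoint_neighborSet.2 h v)]

structure IsEulerianOrientation (G : SimpleGraph V) (R : V → V → Prop) : Prop where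
  asymm : ∀ ⦃v w⦄, R v w → ¬ R w v
  adj_iff : ∀ ⦃v w⦄, G.Adj v w ↔ R v w ∨ R w v
  ncard_out_eq_ncard_in : ∀ v, {w | R v w}.ncard = {w | R w v}.ncard

namespace IsEulerianOrientation

variable {R S : V → V → Prop}

theorem ncard_neighborSet [Finite V] (hR : G.IsEulerianOrientation R) (v : V) :
    (G.neighborSet v).ncard = 2 * {w | R v w}.ncard := by
  have hsplit : G.neighborSet v = {w | R v w} ∪ {w | R w v} := by
    ext w; exact @hR.adj_iff v w
  have hdisj : Disjoint {w | R v w} {w | R w v} :=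
    Set.disjoint_left.2 fun w h h' => hR.asymm h h'
  rw [hsplit, Set.ncard_union_eq hdisj,
    ← hR.ncard_out_eq_ncard_in, two_mul]

theorem sup [Finite V] (hR : G.IsEulerianOrientation R) (hS : H.IsEulerianOrientation S)
    (h : Disjoint G H) : (G ⊔ H).IsEulerianOrientation fun v w => R v w ∨ S v w := by
  have hGH := disjoint_left.1 h
  refine ⟨?_, ?_, fun v => ?_⟩
  · rintro v w (hvw | hvw) (hwv | hwv)
    · exact hR.asymm hvw hwv
    · exact hGH v w (hR.adj_iff.2 (.inl hvw)) (hS.adj_iff.2 (.inr hwv))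
    · exact hGH w v (hR.adj_iff.2 (.inl hwv)) (hS.adj_iff.2 (.inr hvw))
    · exact hS.asymm hvw hwv
  · intro v w
    rw [sup_adj, hR.adj_iff, hS.adj_iff]
    tauto
  · rw [Set.ofPred_or, Set.ofPred_or, Set.ncard_union_eq, Set.ncard_union_eq,
      hR.ncard_out_eq_ncard_in, hS.ncard_out_eq_ncard_in]
    · exact Set.disjoint_left.2 fun w hvw hwv =>
        hGH w v (hR.adj_iff.2 (.inl hvw)) (hS.adj_iff.2 (.inl hwv))
    · exact Set.disjoint_left.2 fun w hvw hwv =>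
        hGH v w (hR.adj_iff.2 (.inl hvw)) (hS.adj_iff.2 (.inl hwv))

end IsEulerianOrientation

theorem isEulerianOrientation_fromRel {R : V → V → Prop} (hasymm : ∀ ⦃v w⦄, R v w → ¬ R w v)
    (hbal : ∀ v, {w | R v w}.ncard = {w | R w v}.ncard) :
    (fromRel R).IsEulerianOrientation R := by
  refine ⟨hasymm, fun v w => ?_, hbal⟩
  rw [fromRel_adj, and_iff_right_iff_imp]
  rintro (h | h) rfl <;> exact hasymm h h


namespace Walk

variable {u u' : V}

theorem support_dropLast_perm_tail (p : G.Walk u u) : p.support.dropLast.Perm p.support.tail :=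
  List.Perm.cons_inv <| (List.perm_append_singleton u _).symm.trans <| by
    rw [dropLast_support_concat, cons_tail_support]

def Traverses (p : G.Walk u u') (v w : V) : Prop := (v, w) ∈ p.darts.map Dart.toProd

theorem Traverses.adj {p : G.Walk u u'} {v w : V} (h : p.Traverses v w) : G.Adj v w := by
  obtain ⟨d, -, hd⟩ := List.mem_map.1 h
  simpa [hd] using d.adj

theorem IsTrail.traverses_asymm {p : G.Walk u u'} (hp : p.IsTrail) {v w : V}
    (hvw : p.Traverses v w) : ¬ p.Traverses w v := by
  intro hwv
  obtain ⟨d₁, hd₁, h₁⟩ := List.mem_map.1 hvw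
  obtain ⟨d₂, hd₂, h₂⟩ := List.mem_map.1 hwv
  have hedge : d₁.edge = d₂.edge := by simp [Dart.edge, h₁, h₂, Sym2.eq_swap]
  have hd : d₁ = d₂ := List.inj_on_of_nodup_map hp.edges_nodup hd₁ hd₂ hedge
  rw [hd, h₂, Prod.mk.injEq] at h₁
  exact hvw.adj.ne h₁.2

theorem IsTrail.ncard_traverses_out_eq_in [Finite V] {p : G.Walk u u} (hp : p.IsTrail) (v : V) :
    {w | p.Traverses v w}.ncard = {w | p.Traverses w v}.ncard := by
  classical
  set L := p.darts.map Dart.toProd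
  have hL : L.Nodup := (hp.edges_nodup.of_map _).map Dart.toProd_injective
  calc {w | p.Traverses v w}.ncard = (L.map Prod.fst).count v := hL.ncard_setOf_prodMk_mem v
    _ = p.support.dropLast.count v := by rw [List.map_map, ← map_fst_darts]; rfl
    _ = p.support.tail.count v := p.support_dropLast_perm_tail.count_eq v
    _ = ((L.map Prod.swap).map Prod.fst).count v := by
      rw [List.map_map, List.map_map, ← map_snd_darts]; rfl
    _ = {w | p.Traverses w v}.ncard := by
      rw [← (hL.map Prod.swap_injective).ncard_setOf_prodMk_mem]
      congr 1
      ext w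
      simp [L, Traverses, Prod.swap_eq_iff_eq_swap]

theorem IsTrail.isEulerianOrientation_traverses [Finite V] {p : G.Walk u u} (hp : p.IsTrail) :
    (fromRel p.Traverses).IsEulerianOrientation p.Traverses :=
  isEulerianOrientation_fromRel (fun _ _ => hp.traverses_asymm) hp.ncard_traverses_out_eq_in

theorem fromRel_traverses_le (p : G.Walk u u') : fromRel p.Traverses ≤ G := by
  rintro v w ⟨-, h | h⟩
  exacts [h.adj, h.adj.symm]

theorem IsPath.exists_isCycle_of_adj_mem_support {x y z x' : V} {h : G.Adj x y}
    {p : G.Walk y z} (hp : (cons h p).IsPath) (hx' : G.Adj x' x) (hx'y : x' ≠ y)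
    (hmem : x' ∈ (cons h p).support) : ∃ c : G.Walk x' x', c.IsCycle := by
  classical
  refine ⟨cons hx' ((cons h p).takeUntil x' hmem), (cons_isCycle_iff _ _).2
    ⟨hp.takeUntil hmem, fun hedge => ?_⟩⟩
  have hedge' := edges_takeUntil_subset_edges _ hmem hedge
  rw [edges_cons, List.mem_cons, Sym2.eq_iff] at hedge'
  obtain ⟨-, hx⟩ := (cons_isPath_iff _ _).1 hp
  rcases hedge' with (⟨-, hxy⟩ | ⟨hx'', -⟩) | hedge''
  · exact h.ne hxy
  · exact hx'y hx''
  · exact hx (p.snd_mem_support_of_mem_edges hedge'')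

end Walk

open Walk in
theorem exists_isCycle_of_ncard_neighborSet_ne_one [Finite V]
    (hdeg : ∀ v, (G.neighborSet v).ncard ≠ 1) {a b : V} (hab : G.Adj a b) :
    ∃ (u : V) (c : G.Walk u u), c.IsCycle := by
  classical
  have := Fintype.ofFinite V
  -- Without a cycle, every path could be prolonged at its start beyond `Fintype.card V`.
  by_contra! hacyc
  have hlong : ∀ n, ∃ (x y z : V) (h : G.Adj x y) (p : G.Walk y z),
      (cons h p).IsPath ∧ p.length = n := by
    intro n
    induction n with
    | zero => exact ⟨a, b, b, hab, nil, by simp [hab.ne], rfl⟩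
    | succ n ih =>
      obtain ⟨x, y, z, h, p, hp, hlen⟩ := ih
      have hdeg_x : 1 < (G.neighborSet x).ncard :=
        lt_of_le_of_ne ((Set.ncard_pos).2 ⟨y, h⟩) (hdeg x).symm
      obtain ⟨x', hx', hx'y⟩ := Set.exists_ne_of_one_lt_ncard hdeg_x y
      refine ⟨x', x, z, hx'.symm, cons h p, (cons_isPath_iff _ _).2 ⟨hp, fun hmem => ?_⟩,
        by simp [hlen]⟩
      obtain ⟨c, hc⟩ := hp.exists_isCycle_of_adj_mem_support hx'.symm hx'y hmem
      exact hacyc x' c hc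
  obtain ⟨x, y, z, h, p, hp, hlen⟩ := hlong (Fintype.card V)
  have := hp.length_lt
  simp only [length_cons] at this
  omega

theorem exists_isEulerianOrientation [Finite V] (G : SimpleGraph V)
    (h : ∀ v, Even (G.neighborSet v).ncard) : ∃ R, G.IsEulerianOrientation R := by
  induction G using WellFoundedLT.induction with
  | _ G ih =>
  rcases eq_or_ne G ⊥ with rfl | hG
  · exact ⟨fun _ _ => False, ⟨fun _ _ h _ => h, by simp, fun v => rfl⟩⟩
  obtain ⟨a, b, hab⟩ := ne_bot_iff_exists_adj.1 hG
  obtain ⟨u, c, hc⟩ := exists_isCycle_of_ncard_neighborSet_ne_one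
    (fun v h1 => by simpa [h1] using h v) hab
  set C := fromRel c.Traverses
  have hC : C.IsEulerianOrientation c.Traverses :=
    hc.isCircuit.isTrail.isEulerianOrientation_traverses
  have hCle : C ≤ G := c.fromRel_traverses_le
  have hCne : C ≠ ⊥ := by
    cases c with
    | nil => exact absurd Walk.nil_nil hc.not_nil
    | cons h q =>
      exact ne_bot_iff_exists_adj.2 ⟨_, _, hC.adj_iff.2 (.inl (List.mem_cons_self ..))⟩
  have hdisj : Disjoint (G \ C) C := disjoint_sdiff_self_left
  have heven : ∀ v, Even ((G \ C).neighborSet v).ncard := by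
    intro v
    have hv := h v
    rw [← sdiff_sup_cancel hCle, ncard_neighborSet_sup hdisj, hC.ncard_neighborSet] at hv
    simpa [Nat.even_add] using hv
  obtain ⟨R, hR⟩ := ih (G \ C) (sdiff_lt hCle hCne) heven
  exact ⟨_, sdiff_sup_cancel hCle ▸ hR.sup hC hdisj⟩

theorem ncard_neighborSet_fromRel_perm (σ : Equiv.Perm V) (hσ : ∀ v, σ (σ v) ≠ v) (v : V) :
    ((fromRel fun x y => y = σ x).neighborSet v).ncard = 2 := by
  have hfix : ∀ v, σ v ≠ v := fun v h => hσ v (by rw [h, h])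
  have hneighbor : (fromRel fun x y => y = σ x).neighborSet v = {σ v, σ⁻¹ v} := by
    ext w
    simp only [mem_neighborSet, fromRel_adj, Set.mem_insert_iff, Set.mem_singleton_iff,
      Equiv.Perm.eq_inv_iff_eq]
    constructor
    · rintro ⟨-, h | h⟩
      exacts [.inl h, .inr h.symm]
    · rintro (rfl | rfl)
      exacts [⟨(hfix v).symm, .inl rfl⟩, ⟨hfix w, .inr rfl⟩]
  rw [hneighbor, Set.ncard_pair]
  intro h
  exact hσ v (by rw [h]; simp)

end SimpleGraph

section

open SimpleGraph

variable {V : Type*} {G : SimpleGraph V} {r : ℕ}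

theorem hasKFactor_two_of_isRegular' [Fintype V] (hr : Even r) (hr0 : r ≠ 0)
    (hG : IsRegular' G r) : HasKFactor G 2 := by
  obtain ⟨R, hR⟩ := G.exists_isEulerianOrientation fun v => hG v ▸ hr
  obtain ⟨m, rfl⟩ := hr
  have hout : ∀ v, {w | R v w}.ncard = m := fun v => by
    have := hR.ncard_neighborSet v
    rw [hG v] at this
    omega
  obtain ⟨f, hf, hfR⟩ := exists_injective_of_le_ncard_of_ncard_le (r := R) (m := m) (by omega)
    (fun v => (hout v).ge) (fun v => (hR.ncard_out_eq_ncard_in v ▸ hout v).le)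
  set σ := Equiv.ofBijective f (Finite.injective_iff_bijective.1 hf)
  have hσ : ∀ v, σ (σ v) ≠ v := fun v (hffv : f (f v) = v) =>
    hR.asymm (hfR v) (by simpa [hffv] using hfR (f v))
  refine ⟨fromRel fun x y => y = σ x, ?_, ncard_neighborSet_fromRel_perm σ hσ⟩
  rintro v w ⟨-, rfl | rfl⟩
  exacts [hR.adj_iff.2 (.inl (hfR v)), hR.adj_iff.2 (.inr (hfR w))]

theorem hasKFactor_two_mul_of_isRegular' [Fintype V] {j : ℕ} (hr : Even r) (hjr : 2 * j ≤ r)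
    (hG : IsRegular' G r) : HasKFactor G (2 * j) := by
  induction j generalizing G r with
  | zero => exact ⟨⊥, bot_le, fun v => by simp⟩
  | succ j ih =>
    obtain ⟨F, hFG, hF⟩ := hasKFactor_two_of_isRegular' hr (by omega) hG
    have hdisj : Disjoint (G \ F) F := disjoint_sdiff_self_left
    have hG' : IsRegular' (G \ F) (r - 2) := fun v => by
      have := ncard_neighborSet_sup hdisj v
      rw [sdiff_sup_cancel hFG, hG v, hF v] at this
      omega
    obtain ⟨F', hF'G, hF'⟩ := ih (hr.tsub even_two) (by omega) hG'
    refine ⟨F' ⊔ F, sup_le (hF'G.trans sdiff_le) hFG, fun v => ?_⟩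
    rw [ncard_neighborSet_sup (hdisj.mono_left hF'G), hF' v, hF v]
    ring

end

theorem stmt_6_general (r k : ℕ) (hre : Even r)
    (hke : Even k) (hkr : k ≤ r) {V : Type*} [Fintype V]
    (G : SimpleGraph V) (hreg : IsRegular' G r) :
    HasKFactor G k := by
  obtain ⟨j, rfl⟩ := hke
  simpa [two_mul] using hasKFactor_two_mul_of_isRegular' hre (by omega) hreg

/-- (Petersen) Let `r` and `k` be positive even integers with `k ≤ r`. Then
every `r`-regular finite simple graph has a `k`-factor. -/
theorem stmt_6 (r k : ℕ) (hr : 0 < r) (hk : 0 < k) (hre : Even r)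
    (hke : Even k) (hkr : k ≤ r) {V : Type*} [Fintype V]
    (G : SimpleGraph V) (hreg : IsRegular' G r) :
    HasKFactor G k :=
  stmt_6_general r k hre hke hkr G hreg
end
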